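/- arXiv:2112.14525 — 6 statements merged into one kernel-verified Lean document; each statement's English description precedes it below -/
import Mathlib

section
/- Let (a_n) be a sequence in (0,1), and let (r_n), (v_n) be sequences of real numbers such that (i) ∑_{n≥0} a_n = ∞, (ii) limsup r_n ≤ 0, and (iii) (v_n) is nonnegative with ∑_{n≥0} v_n < ∞. If (s_n) is a sequence of nonnegative real numbers satisfying s_{n+1} ≤ (1 − a_n)·s_n + a_n·r_n + v_n for all n ∈ ℕ, then lim s_n = 0. -/
/-!
Past an index `N` beyond which `rₙ ≤ ε` and the tail of `∑ vₙ` is at most `ε`, the shifted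
sequence `t_k = s_{k+N} - ε` satisfies `t_{k+1} ≤ (1 - a_{k+N}) t_k + v_{k+N}`, which unrolls to
`t_k ≤ (∏ (1 - aᵢ)) t_0 + ∑ vᵢ`. The product is at most `exp (-∑ aᵢ)`, hence tends to `0`,
so eventually `sₙ < 3ε`.
-/

open Filter Finset Topology

theorem prod_one_sub_le_exp_neg_sum {ι : Type*} (s : Finset ι) {f : ι → ℝ}
    (hf : ∀ i ∈ s, f i ≤ 1) : ∏ i ∈ s, (1 - f i) ≤ Real.exp (-∑ i ∈ s, f i) := by
  rw [← sum_neg_distrib, Real.exp_sum]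
  exact prod_le_prod (fun i hi => sub_nonneg.2 (hf i hi))
    fun i _ => by linarith [Real.add_one_le_exp (-f i)]

theorem tendsto_prod_one_sub_nhds_zero {a : ℕ → ℝ} (ha : ∀ n, a n ≤ 1)
    (hdiv : Tendsto (fun n => ∑ i ∈ range n, a i) atTop atTop) :
    Tendsto (fun n => ∏ i ∈ range n, (1 - a i)) atTop (𝓝 0) :=
  squeeze_zero (fun _ => prod_nonneg fun i _ => sub_nonneg.2 (ha i))
    (fun _ => prod_one_sub_le_exp_neg_sum _ fun i _ => ha i)
    (Real.tendsto_exp_neg_atTop_nhds_zero.comp hdiv)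

theorem tendsto_sum_range_add_atTop {a : ℕ → ℝ} (N : ℕ)
    (hdiv : Tendsto (fun n => ∑ i ∈ range n, a i) atTop atTop) :
    Tendsto (fun n => ∑ i ∈ range n, a (i + N)) atTop atTop := by
  have hsplit : ∀ n, ∑ i ∈ range n, a (i + N) =
      ∑ i ∈ range (n + N), a i - ∑ i ∈ range N, a i := fun n => by
    rw [add_comm n N, sum_range_add]
    simp only [add_comm N, add_sub_cancel_left]
  simpa only [hsplit, sub_eq_add_neg] using
    tendsto_atTop_add_const_right _ _ ((tendsto_add_atTop_iff_nat N).2 hdiv)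

theorem le_prod_one_sub_mul_add_sum {a v t : ℕ → ℝ} (ha : ∀ n, a n ∈ Set.Icc (0 : ℝ) 1)
    (hv : ∀ n, 0 ≤ v n) (hrec : ∀ n, t (n + 1) ≤ (1 - a n) * t n + v n) (n : ℕ) :
    t n ≤ (∏ i ∈ range n, (1 - a i)) * t 0 + ∑ i ∈ range n, v i := by
  induction n with
  | zero => simp
  | succ n ih =>
    obtain ⟨ha0, ha1⟩ := ha n
    have hV : 0 ≤ ∑ i ∈ range n, v i := sum_nonneg fun i _ => hv i
    calc t (n + 1) ≤ (1 - a n) * t n + v n := hrec n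
      _ ≤ (1 - a n) * ((∏ i ∈ range n, (1 - a i)) * t 0 + ∑ i ∈ range n, v i) + v n := by
        gcongr
      _ ≤ (∏ i ∈ range (n + 1), (1 - a i)) * t 0 + ∑ i ∈ range (n + 1), v i := by
        rw [prod_range_succ, sum_range_succ]; nlinarith

theorem eventually_forall_sum_range_add_le {v : ℕ → ℝ} (hv : ∀ n, 0 ≤ v n)
    (hsum : Summable v) {ε : ℝ} (hε : 0 < ε) :
    ∀ᶠ N in atTop, ∀ k, ∑ i ∈ range k, v (i + N) ≤ ε := by
  filter_upwards [(tendsto_sum_nat_add v).eventually_le_const hε] with N hN k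
  exact (((summable_nat_add_iff N).2 hsum).sum_le_tsum _ fun i _ => hv _).trans hN

theorem eventually_lt_three_mul_of_le_one_sub_mul_add {a r v s : ℕ → ℝ}
    (ha : ∀ n, a n ∈ Set.Icc (0 : ℝ) 1)
    (hdiv : Tendsto (fun n => ∑ i ∈ range n, a i) atTop atTop)
    (hlimsup : ∀ ε : ℝ, 0 < ε → ∃ N, ∀ n ≥ N, r n ≤ ε)
    (hv0 : ∀ n, 0 ≤ v n) (hvsum : Summable v)
    (hrec : ∀ n, s (n + 1) ≤ (1 - a n) * s n + a n * r n + v n) {ε : ℝ} (hε : 0 < ε) :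
    ∀ᶠ n in atTop, s n < 3 * ε := by
  obtain ⟨N₀, hr⟩ := hlimsup ε hε
  obtain ⟨N, hN₀, hv⟩ := ((eventually_ge_atTop N₀).and
    (eventually_forall_sum_range_add_le hv0 hvsum hε)).exists
  have hbound := le_prod_one_sub_mul_add_sum (t := fun k => s (k + N) - ε) (fun k => ha (k + N))
    (fun k => hv0 (k + N)) fun k => by
      have har : a (k + N) * r (k + N) ≤ a (k + N) * ε :=
        mul_le_mul_of_nonneg_left (hr _ (by omega)) (ha _).1
      have := hrec (k + N)
      rw [add_right_comm]
      linarith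
  have hprod : Tendsto (fun k => (∏ i ∈ range k, (1 - a (i + N))) * (s N - ε) + ε)
      atTop (𝓝 ε) := by
    simpa using ((tendsto_prod_one_sub_nhds_zero (fun k => (ha (k + N)).2)
      (tendsto_sum_range_add_atTop N hdiv)).mul_const (s N - ε)).add_const ε
  have hshift : ∀ᶠ k in atTop, s (k + N) < 3 * ε := by
    filter_upwards [hprod.eventually_lt_const (by linarith : ε < 2 * ε)] with k hk
    have := hbound k
    simp only [zero_add] at this
    linarith [hv k]
  rw [← map_add_atTop_eq_nat N]
  exact hshift

/-- Xu's lemma: if `∑ aₙ = ∞`, `limsup rₙ ≤ 0` (expressed in its ε-form) and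
`∑ vₙ < ∞` with `vₙ ≥ 0`, then any nonnegative sequence `sₙ` satisfying
`s_{n+1} ≤ (1 - aₙ) sₙ + aₙ rₙ + vₙ` tends to `0`. -/
theorem stmt0 (a r v s : ℕ → ℝ)
    (ha : ∀ n, a n ∈ Set.Ioo (0 : ℝ) 1)
    (hdiv : Filter.Tendsto (fun n => ∑ i ∈ Finset.range n, a i) Filter.atTop Filter.atTop)
    (hlimsup : ∀ ε : ℝ, 0 < ε → ∃ N, ∀ n ≥ N, r n ≤ ε)
    (hv0 : ∀ n, 0 ≤ v n)
    (hvsum : Summable v)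
    (hs0 : ∀ n, 0 ≤ s n)
    (hrec : ∀ n, s (n + 1) ≤ (1 - a n) * s n + a n * r n + v n) :
    Filter.Tendsto s Filter.atTop (nhds 0) := by
  refine tendsto_order.2 ⟨fun b hb => .of_forall fun n => hb.trans_le (hs0 n), fun b hb => ?_⟩
  filter_upwards [eventually_lt_three_mul_of_le_one_sub_mul_add
    (fun n => Set.Ioo_subset_Icc_self (ha n)) hdiv hlimsup hv0 hvsum hrec (div_pos hb three_pos)]
    with n hn
  linarith
end

section
/- Let (s_n) be a bounded sequence of nonnegative real numbers and D ∈ ℕ, D ≥ 1, an upper bound on (s_n). Let (a_n) ⊂ [0,1], (r_n) ⊂ ℝ and (v_n) ⊂ [0,∞) be sequences, and let A' : ℕ × (0,∞) → ℕ, R, V : (0,∞) → ℕ be functions such that (i) for all ε > 0 and all m ∈ ℕ, ∏_{i=m}^{A'(m,ε)} (1 − a_i) ≤ ε, (ii) for all ε > 0 and all n ≥ R(ε) one has r_n ≤ ε, and (iii) V is a Cauchy rate for ∑ v_n. If s_{n+1} ≤ (1 − a_n)·s_n + a_n·r_n + v_n for all n ∈ ℕ, then lim s_n = 0 with rate of convergence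 θ'(ε) := A'(K, ε/(3D)) + 1, where K := max{ R(ε/3), V(ε/3) + 1 }; that is, for all ε > 0 and all n ≥ θ'(ε), s_n ≤ ε. -/
/-!
From any index `K` past which `rₙ ≤ ρ`, the recursion unrolls to
`sₙ ≤ Pₙ s_K + (1 - Pₙ) ρ + ∑_{K ≤ i < n} vᵢ` with `Pₙ = ∏_{K ≤ i < n} (1 - aᵢ)`.
Taking `ρ = ε/3` and `K = max{R(ε/3), V(ε/3) + 1}` bounds the last two terms by `ε/3` each,
and for `n > A'(K, ε/(3D))` the product is at most `ε/(3D)`, so `Pₙ s_K ≤ ε/3`.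
-/

open Finset

namespace XuLemma

variable {a : ℕ → ℝ}

lemma prod_one_sub_nonneg (ha : ∀ n, a n ∈ Set.Icc (0 : ℝ) 1) (s : Finset ℕ) :
    0 ≤ ∏ i ∈ s, (1 - a i) :=
  prod_nonneg fun i _ ↦ (Set.Icc.mem_iff_one_sub_mem.mp (ha i)).1

lemma prod_one_sub_Ico_le_prod_Icc (ha : ∀ n, a n ∈ Set.Icc (0 : ℝ) 1) {K N n : ℕ}
    (hn : N < n) : ∏ i ∈ Ico K n, (1 - a i) ≤ ∏ i ∈ Icc K N, (1 - a i) :=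
  prod_anti_set_of_le_one (fun i ↦ (Set.Icc.mem_iff_one_sub_mem.mp (ha i)).1)
    (fun i ↦ (Set.Icc.mem_iff_one_sub_mem.mp (ha i)).2) (Icc_subset_Ico_right hn)

lemma le_of_prod_Icc_ne_one {M : Type*} [CommMonoid M] {f : ℕ → M} {K N : ℕ}
    (h : ∏ i ∈ Icc K N, f i ≠ 1) : K ≤ N := by
  by_contra! hNK
  exact h (by rw [Icc_eq_empty_of_lt hNK, prod_empty])

theorem le_prod_mul_add_of_le_one_sub_mul_add {s r v : ℕ → ℝ} {ρ : ℝ} {K : ℕ}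
    (ha : ∀ n, a n ∈ Set.Icc (0 : ℝ) 1) (hv0 : ∀ n, 0 ≤ v n) (hr : ∀ n ≥ K, r n ≤ ρ)
    (hrec : ∀ n, s (n + 1) ≤ (1 - a n) * s n + a n * r n + v n) {n : ℕ} (hn : K ≤ n) :
    s n ≤ (∏ i ∈ Ico K n, (1 - a i)) * s K + (1 - ∏ i ∈ Ico K n, (1 - a i)) * ρ
      + ∑ i ∈ Ico K n, v i := by
  induction n, hn using Nat.le_induction with
  | base => simp
  | succ n hKn ih =>
    rw [prod_Ico_succ_top hKn, sum_Ico_succ_top hKn]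
    set P := ∏ i ∈ Ico K n, (1 - a i)
    set S := ∑ i ∈ Ico K n, v i
    obtain ⟨han0, han1⟩ := ha n
    have hS : 0 ≤ S := sum_nonneg fun i _ ↦ hv0 i
    have has := mul_le_mul_of_nonneg_left ih (sub_nonneg.2 han1)
    have har := mul_le_mul_of_nonneg_left (hr n hKn) han0
    have haS := mul_nonneg han0 hS
    linarith [hrec n]

lemma sum_Ico_le_of_cauchy_rate {v : ℕ → ℝ} (hv0 : ∀ n, 0 ≤ v n) {ε : ℝ} {V K : ℕ}
    (hV : ∀ n : ℕ, ∑ i ∈ Icc (V + 1) (V + n), v i ≤ ε) (hK : V + 1 ≤ K) (n : ℕ) :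
    ∑ i ∈ Ico K n, v i ≤ ε :=
  (sum_le_sum_of_subset_of_nonneg
    (fun i hi ↦ by simp only [mem_Ico, mem_Icc] at hi ⊢; omega) fun i _ _ ↦ hv0 i).trans (hV n)

end XuLemma

open XuLemma in
theorem stmt2_general (s a r v : ℕ → ℝ) (D : ℕ)
    (hsD : ∀ n, s n ≤ (D : ℝ))
    (ha : ∀ n, a n ∈ Set.Icc (0 : ℝ) 1)
    (hv0 : ∀ n, 0 ≤ v n)
    (A' : ℕ → ℝ → ℕ) (R V : ℝ → ℕ)
    (hA' : ∀ ε : ℝ, 0 < ε → ∀ m : ℕ, ∏ i ∈ Finset.Icc m (A' m ε), (1 - a i) ≤ ε)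
    (hR : ∀ ε : ℝ, 0 < ε → ∀ n ≥ R ε, r n ≤ ε)
    (hV : ∀ ε : ℝ, 0 < ε → ∀ n : ℕ, ∑ i ∈ Finset.Icc (V ε + 1) (V ε + n), v i ≤ ε)
    (hrec : ∀ n, s (n + 1) ≤ (1 - a n) * s n + a n * r n + v n) :
    ∀ ε : ℝ, 0 < ε →
      ∀ n ≥ A' (max (R (ε / 3)) (V (ε / 3) + 1)) (ε / (3 * D)) + 1,
        s n ≤ ε := by
  intro ε hε n hn
  set K := max (R (ε / 3)) (V (ε / 3) + 1)
  set δ := ε / (3 * D)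
  rcases le_or_gt (3 * (D : ℝ)) ε with hεD | hεD
  · linarith [hsD n, (Nat.cast_nonneg D : (0 : ℝ) ≤ D)]
  have hD : (0 : ℝ) < D := by linarith
  have hδ : 0 < δ := by positivity
  have hδD : δ * D = ε / 3 := by simp only [δ]; field_simp
  have hPK := hA' δ hδ K
  -- `Icc K (A' K δ)` is nonempty: an empty product would be `1 > δ`.
  have hKn : K ≤ n :=
    (le_of_prod_Icc_ne_one (hPK.trans_lt ((div_lt_one (by positivity)).2 hεD)).ne).trans
      (by omega)
  have hunroll := le_prod_mul_add_of_le_one_sub_mul_add (K := K) ha hv0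
    (fun m hm ↦ hR (ε / 3) (by positivity) m ((le_max_left _ _).trans hm)) hrec hKn
  have hsum := sum_Ico_le_of_cauchy_rate (K := K) hv0 (hV (ε / 3) (by positivity))
    (le_max_right _ _) n
  have hP0 := prod_one_sub_nonneg ha (Ico K n)
  have hPδ := (prod_one_sub_Ico_le_prod_Icc ha (by omega : A' K δ < n)).trans hPK
  have hPs : (∏ i ∈ Ico K n, (1 - a i)) * s K ≤ ε / 3 := by
    rw [← hδD]
    exact (mul_le_mul_of_nonneg_left (hsD K) hP0).trans (mul_le_mul_of_nonneg_right hPδ hD.le)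
  have hPρ : 0 ≤ (∏ i ∈ Ico K n, (1 - a i)) * (ε / 3) := by positivity
  linarith

/-- Quantitative Xu lemma with a function `A'` such that
`∏_{i=m}^{A'(m,ε)} (1 - aᵢ) ≤ ε`: the rate of convergence of `sₙ` towards `0` is
`θ'(ε) = A'(K, ε/(3D)) + 1` where `K = max{R(ε/3), V(ε/3) + 1}`. -/
theorem stmt2 (s a r v : ℕ → ℝ) (D : ℕ) (hD : 1 ≤ D)
    (hs0 : ∀ n, 0 ≤ s n) (hsD : ∀ n, s n ≤ (D : ℝ))
    (ha : ∀ n, a n ∈ Set.Icc (0 : ℝ) 1)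
    (hv0 : ∀ n, 0 ≤ v n)
    (A' : ℕ → ℝ → ℕ) (R V : ℝ → ℕ)
    (hA' : ∀ ε : ℝ, 0 < ε → ∀ m : ℕ, ∏ i ∈ Finset.Icc m (A' m ε), (1 - a i) ≤ ε)
    (hR : ∀ ε : ℝ, 0 < ε → ∀ n ≥ R ε, r n ≤ ε)
    (hV : ∀ ε : ℝ, 0 < ε → ∀ n : ℕ, ∑ i ∈ Finset.Icc (V ε + 1) (V ε + n), v i ≤ ε)
    (hrec : ∀ n, s (n + 1) ≤ (1 - a n) * s n + a n * r n + v n) :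
    ∀ ε : ℝ, 0 < ε →
      ∀ n ≥ A' (max (R (ε / 3)) (V (ε / 3) + 1)) (ε / (3 * D)) + 1,
        s n ≤ ε :=
  stmt2_general s a r v D hsD ha hv0 A' R V hA' hR hV hrec
end

section
/- Let (s_n) be a bounded sequence of nonnegative real numbers and D ∈ ℕ, D ≥ 1, an upper bound on (s_n). Let (a_n) ⊂ [0,1] and (r_n) ⊂ ℝ be sequences, and let A' : ℕ × (0,∞) → ℕ be a function such that for all ε > 0 and all m ∈ ℕ, ∏_{i=m}^{A'(m,ε)} (1 − a_i) ≤ ε. Let ε > 0, K, P ∈ ℕ and ℰ ≥ 0 be given. If for all n ∈ [K, P]: (i) s_{n+1} ≤ (1 − a_n)·s_n + a_n·r_n + ℰ, (ii) r_n ≤ ε/3, and (iii) ℰ ≤ ε/(3(P+1)), then s_n ≤ ε for all n ∈ [σ', P], where σ' := A'(K, ε/(3D)) + 1. -/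
/-!
Unrolling the recursion from `K` gives
`s (K + j) ≤ (∏_{i ∈ [K, K + j)} (1 - aᵢ)) · s_K + ε/3 + j · ℰ`.
Once `K + j > σ'`, the product is at most `∏_{i=K}^{σ'-1} (1 - aᵢ) ≤ ε/(3D)`, so the first term is
at most `ε/3` because `s_K ≤ D`, and the accumulated error is at most `(P + 1) · ℰ ≤ ε/3`.
-/

theorem le_prod_one_sub_mul_add_of_recursion {s a r : ℕ → ℝ} {R E : ℝ} {K : ℕ} (j : ℕ)
    (ha : ∀ n, K ≤ n → n < K + j → a n ∈ Set.Icc (0 : ℝ) 1)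
    (hrec : ∀ n, K ≤ n → n < K + j → s (n + 1) ≤ (1 - a n) * s n + a n * r n + E)
    (hr : ∀ n, K ≤ n → n < K + j → r n ≤ R) (hR : 0 ≤ R) (hE : 0 ≤ E) :
    s (K + j) ≤ (∏ i ∈ Finset.Ico K (K + j), (1 - a i)) * s K + R + j * E := by
  induction j with
  | zero => simpa using hR
  | succ j ih =>
    have hlast : K ≤ K + j ∧ K + j < K + (j + 1) := by omega
    have ih := ih (fun n h h' ↦ ha n h (by omega)) (fun n h h' ↦ hrec n h (by omega))
      (fun n h h' ↦ hr n h (by omega))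
    obtain ⟨ha0, ha1⟩ := ha _ hlast.1 hlast.2
    have hstep := hrec _ hlast.1 hlast.2
    have hrR : a (K + j) * r (K + j) ≤ a (K + j) * R :=
      mul_le_mul_of_nonneg_left (hr _ hlast.1 hlast.2) ha0
    have hih : (1 - a (K + j)) * s (K + j) ≤ (1 - a (K + j)) *
        ((∏ i ∈ Finset.Ico K (K + j), (1 - a i)) * s K + R + j * E) :=
      mul_le_mul_of_nonneg_left ih (by linarith)
    rw [← add_assoc, Finset.prod_Ico_succ_top hlast.1]
    push_cast
    nlinarith [mul_nonneg ha0 (mul_nonneg (Nat.cast_nonneg j) hE)]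

/-- Finitary Xu lemma with error term `E` and a function `A'` such that
`∏_{i=m}^{A'(m,ε)} (1 - aᵢ) ≤ ε`: if on `[K, P]` the recursive inequality holds
with error `E ≤ ε/(3(P+1))` and `rₙ ≤ ε/3`, then `sₙ ≤ ε` for all
`n ∈ [σ', P]` with `σ' = A'(K, ε/(3D)) + 1`. -/
theorem stmt4 (s a r : ℕ → ℝ) (D : ℕ) (hD : 1 ≤ D)
    (hs0 : ∀ n, 0 ≤ s n) (hsD : ∀ n, s n ≤ (D : ℝ))
    (ha : ∀ n, a n ∈ Set.Icc (0 : ℝ) 1)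
    (A' : ℕ → ℝ → ℕ)
    (hA' : ∀ ε : ℝ, 0 < ε → ∀ m : ℕ, ∏ i ∈ Finset.Icc m (A' m ε), (1 - a i) ≤ ε)
    (ε : ℝ) (hε : 0 < ε) (K P : ℕ) (E : ℝ) (hE : 0 ≤ E)
    (h1 : ∀ n, K ≤ n → n ≤ P → s (n + 1) ≤ (1 - a n) * s n + a n * r n + E)
    (h2 : ∀ n, K ≤ n → n ≤ P → r n ≤ ε / 3)
    (h3 : E ≤ ε / (3 * (P + 1))) :
    ∀ n, A' K (ε / (3 * D)) + 1 ≤ n → n ≤ P → s n ≤ ε := by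
  intro n hσn hnP
  have hD0 : (0 : ℝ) < D := by exact_mod_cast hD
  have hεD : 0 < ε / (3 * D) := by positivity
  have hprod := hA' _ hεD K
  rcases lt_or_ge n K with hnK | hKn
  · have h3D : 1 ≤ ε / (3 * D) := by
      simpa [Finset.Icc_eq_empty (by omega : ¬K ≤ A' K (ε / (3 * D)))] using hprod
    rw [le_div_iff₀ (by positivity)] at h3D
    linarith [hsD n]
  obtain ⟨j, rfl⟩ := Nat.exists_eq_add_of_le hKn
  have hunrolled := le_prod_one_sub_mul_add_of_recursion j (fun n _ _ ↦ ha n)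
    (fun n h h' ↦ h1 n h (by omega)) (fun n h h' ↦ h2 n h (by omega)) (by positivity) hE
  have hprodK : ∏ i ∈ Finset.Ico K (K + j), (1 - a i) ≤ ε / (3 * D) :=
    (Finset.prod_anti_set_of_le_one (fun i ↦ by linarith [(ha i).2]) (fun i ↦ by linarith [(ha i).1])
      (Finset.Icc_subset_Ico_right (by omega))).trans hprod
  have hfirst : (∏ i ∈ Finset.Ico K (K + j), (1 - a i)) * s K ≤ ε / 3 :=
    calc _ ≤ ε / (3 * D) * D := mul_le_mul hprodK (hsD K) (hs0 K) hεD.le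
      _ = ε / 3 := by field_simp
  have herror : (j : ℝ) * E ≤ ε / 3 :=
    calc (j : ℝ) * E ≤ (P + 1) * E := by gcongr; exact_mod_cast (by omega : j ≤ P + 1)
      _ ≤ (P + 1) * (ε / (3 * (P + 1))) := by gcongr
      _ = ε / 3 := by field_simp
  linarith
end

section
/- Let (X, d) be a metric space and (x_n) a sequence in X. Then (x_n) has the metastability property, i.e. for all ε > 0 and all f : ℕ → ℕ there exists n ∈ ℕ such that d(x_i, x_j) ≤ ε for all i, j ∈ [n, f(n)], if and only if (x_n) is a Cauchy sequence. -/
/-! If `x` is not Cauchy, then for some `ε` every `N` has indices `a N, b N ≥ N` with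
`dist (x (a N)) (x (b N)) ≥ ε`; metastability at `ε / 2` with the bound `f N = max (a N) (b N)`
then produces an `n` for which this pair is `ε / 2`-close, a contradiction. -/

section

variable {X : Type*} [PseudoMetricSpace X]

def Metastable (x : ℕ → X) : Prop :=
  ∀ ε : ℝ, 0 < ε → ∀ f : ℕ → ℕ, ∃ n : ℕ,
    ∀ i, n ≤ i → i ≤ f n → ∀ j, n ≤ j → j ≤ f n → dist (x i) (x j) ≤ ε

theorem CauchySeq.metastable {x : ℕ → X} (hx : CauchySeq x) : Metastable x := by
  intro ε hε _
  obtain ⟨N, hN⟩ := Metric.cauchySeq_iff.mp hx ε hε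
  exact ⟨N, fun i hi _ j hj _ => (hN i hi j hj).le⟩

theorem Metastable.cauchySeq {x : ℕ → X} (hx : Metastable x) : CauchySeq x := by
  rw [Metric.cauchySeq_iff]
  intro ε hε
  by_contra! hfar
  choose a ha b hb hab using hfar
  obtain ⟨n, hn⟩ := hx (ε / 2) (half_pos hε) fun N => max (a N) (b N)
  have hclose := hn (a n) (ha n) (le_max_left _ _) (b n) (hb n) (le_max_right _ _)
  linarith [hab n]

theorem metastable_iff_cauchySeq {x : ℕ → X} : Metastable x ↔ CauchySeq x :=
  ⟨Metastable.cauchySeq, CauchySeq.metastable⟩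

end

/-- A sequence in a metric space has the metastability property if and only if
it is a Cauchy sequence. -/
theorem stmt5 {X : Type*} [MetricSpace X] (x : ℕ → X) :
    (∀ ε : ℝ, 0 < ε → ∀ f : ℕ → ℕ, ∃ n : ℕ,
        ∀ i, n ≤ i → i ≤ f n → ∀ j, n ≤ j → j ≤ f n → dist (x i) (x j) ≤ ε)
      ↔ CauchySeq x :=
  metastable_iff_cauchySeq
end

section
/- Let H be a real Hilbert space, C ⊆ H a nonempty convex subset, T, U : C → C nonexpansive maps with a common fixed point p, u, x₀ ∈ C, and (α_n) ⊂ [0,1], (β_n) ⊂ (0,1). Let (x_n) be the alternating Halpern–Mann iteration with anchor u and starting point x₀, and let N ∈ ℕ, N ≥ 1, satisfy N ≥ max{‖x₀ − p‖, ‖u − p‖}. Assume Γ1 : (0,∞) → ℕ is a rate of convergence for α_n → 0, Γ2 : ℕ → ℕ satisfies ∑_{i=0}^{Γ2(k)} α_i ≥ k for all k, Γ3 is a Cauchy rate for ∑|α_{n+1} − α_n|, Γ4 is a Cauchy rate for ∑|β_{n+1} − β_n|, and γ ∈ (0, 1/2] satisfies γ ≤ β_n ≤ 1 − γ for all n. Then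 for all ε > 0 and all n ≥ θ3(ε), both ‖U(x_{2n+1}) − x_{2n+1}‖ ≤ ε and ‖x_{2n+2} − x_{2n+1}‖ ≤ ε hold, where θ3(ε) := max{ θ1((γε)²/(8N)), Γ1((γε)²/(2N²)) }, θ1(ε) := A(V(ε/2) + ⌈ln(4N/ε)⌉ + 1) + 1, A(k) := Γ2(k+1), and V(ε) := max{ Γ3(ε/(4N)), Γ4(ε/(4N)) }. -/
/-- `V(ε) := max{Γ3(ε/(4N)), Γ4(ε/(4N))}`. -/
noncomputable def Vrate (Γ3 Γ4 : ℝ → ℕ) (N : ℕ) (ε : ℝ) : ℕ :=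
  max (Γ3 (ε / (4 * (N : ℝ)))) (Γ4 (ε / (4 * (N : ℝ))))

/-- `θ1(ε) := A(V(ε/2) + ⌈ln(4N/ε)⌉ + 1) + 1`, where `A(k) := Γ2(k+1)`. -/
noncomputable def theta1 (Γ2 : ℕ → ℕ) (Γ3 Γ4 : ℝ → ℕ) (N : ℕ) (ε : ℝ) : ℕ :=
  Γ2 (Vrate Γ3 Γ4 N (ε / 2) + ⌈Real.log (4 * (N : ℝ) / ε)⌉₊ + 1 + 1) + 1

/-- `θ3(ε) := max{θ1((γε)²/(8N)), Γ1((γε)²/(2N²))}`. -/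
noncomputable def theta3 (Γ1 : ℝ → ℕ) (Γ2 : ℕ → ℕ) (Γ3 Γ4 : ℝ → ℕ) (N : ℕ) (γ : ℝ)
    (ε : ℝ) : ℕ :=
  max (theta1 Γ2 Γ3 Γ4 N ((γ * ε) ^ 2 / (8 * (N : ℝ))))
    (Γ1 ((γ * ε) ^ 2 / (2 * (N : ℝ) ^ 2)))

/-!
The iteration never leaves `C ∩ closedBall p N`, since `T` and `U` are nonexpansive with common
fixed point `p`. Writing `e m = ‖x (2m+2) - x (2m)‖`, one step of each map gives the
perturbed contraction `e (m+1) ≤ (1 - α (m+1)) e m + 2N (|α (m+1) - α m| + |β (m+1) - β m|)`;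
unrolling it with `1 - a ≤ exp (-a)` (a quantitative Xu lemma) shows that `θ1` is a rate for
`e m → 0`. For the Mann step, the Hilbert-space identity for `‖(1 - b) v + b w‖²` gives
`β (1 - β) ‖U z - z‖² ≤ ‖z - p‖² - ‖x (2n+2) - p‖²` with `z = x (2n+1)`, and the anchored step
bounds the right-hand side by `4N e n + N² α n`, which `θ3` makes at most `(γ ε)²`.
-/

open Finset Metric

section ConvexCombination

variable {E : Type*} [NormedAddCommGroup E] [NormedSpace ℝ E]

theorem norm_convexComb_sub_le {a : ℝ} (ha₀ : 0 ≤ a) (ha₁ : a ≤ 1) (v w z : E) :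
    ‖(1 - a) • v + a • w - z‖ ≤ (1 - a) * ‖v - z‖ + a * ‖w - z‖ := by
  have h : (1 - a) • v + a • w - z = (1 - a) • (v - z) + a • (w - z) := by module
  rw [h]
  refine (norm_add_le _ _).trans_eq ?_
  rw [norm_smul, norm_smul, Real.norm_of_nonneg (sub_nonneg.2 ha₁), Real.norm_of_nonneg ha₀]

theorem norm_convexComb_sub_convexComb_le {a a' : ℝ} (ha₀ : 0 ≤ a') (ha₁ : a' ≤ 1)
    (v v' w w' : E) :
    ‖((1 - a') • v' + a' • w') - ((1 - a) • v + a • w)‖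
      ≤ (1 - a') * ‖v' - v‖ + a' * ‖w' - w‖ + |a' - a| * ‖w - v‖ := by
  have h : ((1 - a') • v' + a' • w') - ((1 - a) • v + a • w)
      = (1 - a') • (v' - v) + a' • (w' - w) + (a' - a) • (w - v) := by module
  rw [h]
  refine (norm_add₃_le).trans_eq ?_
  rw [norm_smul, norm_smul, norm_smul, Real.norm_of_nonneg (sub_nonneg.2 ha₁),
    Real.norm_of_nonneg ha₀, Real.norm_eq_abs]

end ConvexCombination

theorem norm_convexComb_sq {H : Type*} [NormedAddCommGroup H] [InnerProductSpace ℝ H]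
    (b : ℝ) (v w : H) :
    ‖(1 - b) • v + b • w‖ ^ 2
      = (1 - b) * ‖v‖ ^ 2 + b * ‖w‖ ^ 2 - b * (1 - b) * ‖v - w‖ ^ 2 := by
  rw [norm_add_sq_real, norm_sub_sq_real, norm_smul, norm_smul, real_inner_smul_left,
    real_inner_smul_right, Real.norm_eq_abs, Real.norm_eq_abs, mul_pow, mul_pow, sq_abs, sq_abs]
  ring

theorem mul_sq_norm_sub_le_sub_sq_norm_convexComb {H : Type*} [NormedAddCommGroup H]
    [InnerProductSpace ℝ H]
    {b : ℝ} (hb₁ : b ≤ 1) {U : H → H} {z p : H} (hU : ‖U z - p‖ ≤ ‖z - p‖) :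
    b * (1 - b) * ‖U z - z‖ ^ 2 ≤ ‖z - p‖ ^ 2 - ‖(1 - b) • U z + b • z - p‖ ^ 2 := by
  have h : (1 - b) • U z + b • z - p = (1 - b) • (U z - p) + b • (z - p) := by module
  have hsq : ‖U z - p‖ ^ 2 ≤ ‖z - p‖ ^ 2 := pow_le_pow_left₀ (norm_nonneg _) hU 2
  rw [h, norm_convexComb_sq, sub_sub_sub_cancel_right]
  nlinarith [mul_le_mul_of_nonneg_left hsq (sub_nonneg.2 hb₁)]

theorem mapsTo_inter_closedBall {H : Type*} [NormedAddCommGroup H] {C : Set H} {T : H → H}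
    (hT : Set.MapsTo T C C) (hTne : ∀ x ∈ C, ∀ y ∈ C, ‖T x - T y‖ ≤ ‖x - y‖)
    {p : H} (hp : p ∈ C) (hTp : T p = p) (r : ℝ) :
    Set.MapsTo T (C ∩ closedBall p r) (C ∩ closedBall p r) := by
  intro y ⟨hyC, hyr⟩
  refine ⟨hT hyC, ?_⟩
  rw [mem_closedBall, dist_eq_norm] at hyr ⊢
  calc ‖T y - p‖ = ‖T y - T p‖ := by rw [hTp]
    _ ≤ ‖y - p‖ := hTne y hyC p hp
    _ ≤ r := hyr

theorem norm_sub_le_two_mul_of_mem_closedBall {E : Type*} [SeminormedAddCommGroup E]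
    {p y z : E} {r : ℝ} (hy : y ∈ closedBall p r) (hz : z ∈ closedBall p r) :
    ‖y - z‖ ≤ 2 * r := by
  rw [← dist_eq_norm]
  linarith [dist_triangle_right y z p, mem_closedBall.1 hy, mem_closedBall.1 hz]

theorem le_exp_neg_sum_mul_add_sum {e a c : ℕ → ℝ} (ha : ∀ m, a m ∈ Set.Icc (0 : ℝ) 1)
    (hc : ∀ m, 0 ≤ c m)
    (hrec : ∀ m, e (m + 1) ≤ (1 - a (m + 1)) * e m + c m) {n : ℕ} (he : 0 ≤ e n) :
    ∀ m, n ≤ m →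
      e m ≤ Real.exp (-∑ i ∈ Ico (n + 1) (m + 1), a i) * e n + ∑ i ∈ Ico n m, c i := by
  intro m hnm
  induction m, hnm using Nat.le_induction with
  | base => simp
  | succ m hnm ih =>
    set S := ∑ i ∈ Ico (n + 1) (m + 1), a i
    have hC : 0 ≤ ∑ i ∈ Ico n m, c i := sum_nonneg fun i _ => hc i
    have hexp : 1 - a (m + 1) ≤ Real.exp (-a (m + 1)) := by
      linarith [Real.add_one_le_exp (-a (m + 1))]
    rw [sum_Ico_succ_top (by omega), sum_Ico_succ_top hnm, neg_add, Real.exp_add]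
    calc e (m + 1) ≤ (1 - a (m + 1)) * (Real.exp (-S) * e n + ∑ i ∈ Ico n m, c i) + c m :=
          (hrec m).trans (by gcongr; linarith [(ha (m + 1)).2])
      _ ≤ Real.exp (-a (m + 1)) * (Real.exp (-S) * e n) + ∑ i ∈ Ico n m, c i + c m := by
          rw [mul_add]
          gcongr
          exact mul_le_of_le_one_left hC (by linarith [(ha (m + 1)).1])
      _ = _ := by ring

theorem sub_le_sum_Ico_of_le_sum_range {α : ℕ → ℝ} (hα : ∀ n, α n ∈ Set.Icc (0 : ℝ) 1)
    {k M n m : ℕ} (hk : (k : ℝ) ≤ ∑ i ∈ range (M + 1), α i) (hM : M ≤ m) (hn : n ≤ m + 1) :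
    (k : ℝ) - n ≤ ∑ i ∈ Ico n (m + 1), α i := by
  rw [sum_Ico_eq_sub _ hn]
  have hmono : ∑ i ∈ range (M + 1), α i ≤ ∑ i ∈ range (m + 1), α i :=
    sum_le_sum_of_subset_of_nonneg (range_subset_range.2 (by omega)) fun i _ _ => (hα i).1
  have hn : ∑ i ∈ range n, α i ≤ n := by
    simpa using sum_le_sum fun i (_ : i ∈ range n) => (hα i).2
  linarith

theorem sum_Ico_le_of_cauchyRate {b : ℕ → ℝ} (hb : ∀ i, 0 ≤ b i) {G : ℕ} {ε : ℝ}
    (hG : ∀ n, ∑ i ∈ Icc (G + 1) (G + n), b i ≤ ε) {n m : ℕ} (hn : G < n) :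
    ∑ i ∈ Ico n m, b i ≤ ε := by
  refine (sum_le_sum_of_subset_of_nonneg ?_ fun i _ _ => hb i).trans (hG m)
  intro i hi
  simp only [mem_Ico, mem_Icc] at hi ⊢
  omega

theorem le_of_theta1_le {e α β : ℕ → ℝ} {N : ℕ} (hN : 0 < (N : ℝ))
    (hα : ∀ n, α n ∈ Set.Icc (0 : ℝ) 1) (he₀ : ∀ m, 0 ≤ e m) (he : ∀ m, e m ≤ 2 * N)
    (hrec : ∀ m, e (m + 1) ≤
      (1 - α (m + 1)) * e m + 2 * N * (|α (m + 1) - α m| + |β (m + 1) - β m|))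
    {Γ2 : ℕ → ℕ} {Γ3 Γ4 : ℝ → ℕ}
    (hΓ2 : ∀ k : ℕ, (k : ℝ) ≤ ∑ i ∈ range (Γ2 k + 1), α i)
    (hΓ3 : ∀ ε : ℝ, 0 < ε → ∀ n : ℕ, ∑ i ∈ Icc (Γ3 ε + 1) (Γ3 ε + n), |α (i + 1) - α i| ≤ ε)
    (hΓ4 : ∀ ε : ℝ, 0 < ε → ∀ n : ℕ, ∑ i ∈ Icc (Γ4 ε + 1) (Γ4 ε + n), |β (i + 1) - β i| ≤ ε)
    {δ : ℝ} (hδ : 0 < δ) {m : ℕ} (hm : theta1 Γ2 Γ3 Γ4 N δ ≤ m) :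
    e m ≤ δ := by
  replace hm : Γ2 (Vrate Γ3 Γ4 N (δ / 2) + ⌈Real.log (4 * N / δ)⌉₊ + 1 + 1) ≤ m :=
    Nat.le_of_succ_le hm
  set V := Vrate Γ3 Γ4 N (δ / 2)
  set L := ⌈Real.log (4 * N / δ)⌉₊
  have hΓ2le : V + L + 1 + 1 ≤ Γ2 (V + L + 1 + 1) + 1 := by
    have h := (hΓ2 (V + L + 1 + 1)).trans
      (sum_le_card_nsmul _ _ 1 fun i _ => (hα i).2)
    simp only [card_range, nsmul_eq_mul, mul_one] at h
    exact_mod_cast h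
  have hVm : V + 1 ≤ m := by omega
  have hunroll := le_exp_neg_sum_mul_add_sum hα
    (fun i => by positivity : ∀ i, 0 ≤ 2 * (N : ℝ) * (|α (i + 1) - α i| + |β (i + 1) - β i|))
    hrec (he₀ (V + 1)) m hVm
  have hlog : Real.log (4 * N / δ) ≤ ∑ i ∈ Ico (V + 1 + 1) (m + 1), α i := by
    have h := sub_le_sum_Ico_of_le_sum_range hα (hΓ2 (V + L + 1 + 1)) hm (n := V + 1 + 1)
      (by omega)
    push_cast at h
    linarith [Nat.le_ceil (Real.log (4 * N / δ))]
  have hexp : Real.exp (-∑ i ∈ Ico (V + 1 + 1) (m + 1), α i) * e (V + 1) ≤ δ / 2 :=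
    calc _ ≤ Real.exp (-Real.log (4 * N / δ)) * (2 * N) := by
          gcongr
          exacts [he₀ _, he _]
      _ = δ / 2 := by
          rw [Real.exp_neg, Real.exp_log (by positivity)]
          field_simp
          ring
  have hvar : ∑ i ∈ Ico (V + 1) m, 2 * (N : ℝ) * (|α (i + 1) - α i| + |β (i + 1) - β i|)
      ≤ δ / 2 := by
    have hα' := sum_Ico_le_of_cauchyRate (fun i => abs_nonneg (α (i + 1) - α i))
      (hΓ3 (δ / 2 / (4 * N)) (by positivity)) (n := V + 1) (m := m)
      (Nat.lt_succ_of_le (le_max_left _ _))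
    have hβ' := sum_Ico_le_of_cauchyRate (fun i => abs_nonneg (β (i + 1) - β i))
      (hΓ4 (δ / 2 / (4 * N)) (by positivity)) (n := V + 1) (m := m)
      (Nat.lt_succ_of_le (le_max_right _ _))
    rw [← mul_sum, sum_add_distrib]
    calc _ ≤ 2 * (N : ℝ) * (δ / 2 / (4 * N) + δ / 2 / (4 * N)) := by gcongr
      _ = δ / 2 := by field_simp; ring
  linarith

structure IsAltHalpernMann {H : Type*} [AddCommGroup H] [Module ℝ H] (T U : H → H) (u : H)
    (α β : ℕ → ℝ) (x : ℕ → H) : Prop where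
  odd : ∀ n, x (2 * n + 1) = (1 - α n) • T (x (2 * n)) + α n • u
  even : ∀ n, x (2 * n + 2) = (1 - β n) • U (x (2 * n + 1)) + β n • x (2 * n + 1)

namespace IsAltHalpernMann

variable {H : Type*} [NormedAddCommGroup H] [NormedSpace ℝ H] {T U : H → H} {u : H}
  {α β : ℕ → ℝ} {x : ℕ → H}

theorem mem (hx : IsAltHalpernMann T U u α β x) {K : Set H} (hK : Convex ℝ K)
    (hT : Set.MapsTo T K K) (hU : Set.MapsTo U K K) (hu : u ∈ K) (hx₀ : x 0 ∈ K)
    (hα : ∀ n, α n ∈ Set.Icc (0 : ℝ) 1) (hβ : ∀ n, β n ∈ Set.Icc (0 : ℝ) 1) (k : ℕ) :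
    x k ∈ K := by
  have hodd : ∀ n, x (2 * n) ∈ K → x (2 * n + 1) ∈ K := fun n h => by
    rw [hx.odd n]
    exact hK (hT h) hu (by linarith [(hα n).2]) (hα n).1 (by ring)
  have heven : ∀ n, x (2 * n) ∈ K → x (2 * (n + 1)) ∈ K := fun n h => by
    rw [mul_add, mul_one, hx.even n]
    exact hK (hU (hodd n h)) (hodd n h) (by linarith [(hβ n).2]) (hβ n).1 (by ring)
  have hevens : ∀ n, x (2 * n) ∈ K := fun n => by
    induction n with
    | zero => exact hx₀
    | succ n ih => exact heven n ih
  obtain ⟨n, rfl | rfl⟩ := Nat.even_or_odd' k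
  exacts [hevens n, hodd n (hevens n)]

theorem norm_sub_succ_le (hx : IsAltHalpernMann T U u α β x) {C : Set H}
    (hT : ∀ y ∈ C, ∀ z ∈ C, ‖T y - T z‖ ≤ ‖y - z‖)
    (hU : ∀ y ∈ C, ∀ z ∈ C, ‖U y - U z‖ ≤ ‖y - z‖) (hxC : ∀ k, x k ∈ C) {m : ℕ}
    (hα : α (m + 1) ∈ Set.Icc (0 : ℝ) 1) (hβ : β (m + 1) ∈ Set.Icc (0 : ℝ) 1) :
    ‖x (2 * (m + 1) + 2) - x (2 * (m + 1))‖ ≤ (1 - α (m + 1)) * ‖x (2 * m + 2) - x (2 * m)‖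
      + |α (m + 1) - α m| * ‖u - T (x (2 * m))‖
      + |β (m + 1) - β m| * ‖x (2 * m + 1) - U (x (2 * m + 1))‖ := by
  have hodd : ‖x (2 * (m + 1) + 1) - x (2 * m + 1)‖
      ≤ (1 - α (m + 1)) * ‖x (2 * m + 2) - x (2 * m)‖
        + |α (m + 1) - α m| * ‖u - T (x (2 * m))‖ := by
    rw [hx.odd, hx.odd]
    refine (norm_convexComb_sub_convexComb_le hα.1 hα.2 _ _ _ _).trans ?_
    rw [sub_self, norm_zero, mul_zero, add_zero]
    gcongr
    · linarith [hα.2]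
    · exact hT _ (hxC _) _ (hxC _)
  have hUU := hU _ (hxC (2 * (m + 1) + 1)) _ (hxC (2 * m + 1))
  calc ‖x (2 * (m + 1) + 2) - x (2 * (m + 1))‖
      = ‖((1 - β (m + 1)) • U (x (2 * (m + 1) + 1)) + β (m + 1) • x (2 * (m + 1) + 1))
          - ((1 - β m) • U (x (2 * m + 1)) + β m • x (2 * m + 1))‖ := by
        rw [hx.even, show 2 * (m + 1) = 2 * m + 2 by ring, hx.even]
    _ ≤ (1 - β (m + 1)) * ‖x (2 * (m + 1) + 1) - x (2 * m + 1)‖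
          + β (m + 1) * ‖x (2 * (m + 1) + 1) - x (2 * m + 1)‖
          + |β (m + 1) - β m| * ‖x (2 * m + 1) - U (x (2 * m + 1))‖ := by
        refine (norm_convexComb_sub_convexComb_le hβ.1 hβ.2 _ _ _ _).trans ?_
        gcongr
        linarith [hβ.2]
    _ ≤ _ := by linarith

theorem norm_sub_succ_le_of_mem_closedBall (hx : IsAltHalpernMann T U u α β x) {C : Set H}
    (hT : ∀ y ∈ C, ∀ z ∈ C, ‖T y - T z‖ ≤ ‖y - z‖)
    (hU : ∀ y ∈ C, ∀ z ∈ C, ‖U y - U z‖ ≤ ‖y - z‖) {p : H} {r : ℝ}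
    (hTK : Set.MapsTo T (C ∩ closedBall p r) (C ∩ closedBall p r))
    (hUK : Set.MapsTo U (C ∩ closedBall p r) (C ∩ closedBall p r)) (hu : u ∈ closedBall p r)
    (hxK : ∀ k, x k ∈ C ∩ closedBall p r)
    (hα : ∀ n, α n ∈ Set.Icc (0 : ℝ) 1) (hβ : ∀ n, β n ∈ Set.Icc (0 : ℝ) 1) (m : ℕ) :
    ‖x (2 * (m + 1) + 2) - x (2 * (m + 1))‖ ≤ (1 - α (m + 1)) * ‖x (2 * m + 2) - x (2 * m)‖
      + 2 * r * (|α (m + 1) - α m| + |β (m + 1) - β m|) := by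
  have hTu : ‖u - T (x (2 * m))‖ ≤ 2 * r :=
    norm_sub_le_two_mul_of_mem_closedBall hu (hTK (hxK _)).2
  have hUx : ‖x (2 * m + 1) - U (x (2 * m + 1))‖ ≤ 2 * r :=
    norm_sub_le_two_mul_of_mem_closedBall (hxK _).2 (hUK (hxK _)).2
  refine (hx.norm_sub_succ_le hT hU (fun k => (hxK k).1) (hα _) (hβ _)).trans ?_
  nlinarith [mul_le_mul_of_nonneg_left hTu (abs_nonneg (α (m + 1) - α m)),
    mul_le_mul_of_nonneg_left hUx (abs_nonneg (β (m + 1) - β m))]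

theorem sq_norm_sub_sub_sq_norm_sub_le (hx : IsAltHalpernMann T U u α β x) {p : H} {r : ℝ}
    {n : ℕ} (hTp : ‖T (x (2 * n)) - p‖ ≤ ‖x (2 * n) - p‖) (hu : u ∈ closedBall p r)
    (hx₀ : x (2 * n) ∈ closedBall p r) (hx₂ : x (2 * n + 2) ∈ closedBall p r)
    (hα : α n ∈ Set.Icc (0 : ℝ) 1) :
    ‖x (2 * n + 1) - p‖ ^ 2 - ‖x (2 * n + 2) - p‖ ^ 2
      ≤ 4 * r * ‖x (2 * n + 2) - x (2 * n)‖ + r ^ 2 * α n := by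
  rw [mem_closedBall, dist_eq_norm] at hu hx₀ hx₂
  obtain ⟨hα₀, hα₁⟩ := hα
  have hr : ‖x (2 * n + 1) - p‖ ≤ (1 - α n) * ‖x (2 * n) - p‖ + α n * r := by
    rw [hx.odd]
    refine (norm_convexComb_sub_le hα₀ hα₁ _ _ _).trans ?_
    gcongr
  have ha := norm_sub_le_norm_sub_add_norm_sub (x (2 * n)) (x (2 * n + 2)) p
  rw [norm_sub_rev (x (2 * n)) (x (2 * n + 2))] at ha
  have he : ‖x (2 * n + 2) - x (2 * n)‖ ≤ 2 * r :=
    norm_sub_le_two_mul_of_mem_closedBall (mem_closedBall_iff_norm.2 hx₂)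
      (mem_closedBall_iff_norm.2 hx₀)
  set a := ‖x (2 * n) - p‖
  set q := ‖x (2 * n + 2) - p‖
  set e := ‖x (2 * n + 2) - x (2 * n)‖
  calc ‖x (2 * n + 1) - p‖ ^ 2 - q ^ 2 ≤ ((1 - α n) * a + α n * r) ^ 2 - q ^ 2 := by
        gcongr
    _ ≤ (1 - α n) * a ^ 2 + α n * r ^ 2 - q ^ 2 := by
        nlinarith [mul_nonneg (mul_nonneg hα₀ (sub_nonneg.2 hα₁)) (sq_nonneg (a - r))]
    _ ≤ (e + q) ^ 2 + α n * r ^ 2 - q ^ 2 := by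
        have : a ^ 2 ≤ (e + q) ^ 2 := pow_le_pow_left₀ (norm_nonneg _) ha 2
        nlinarith [mul_nonneg hα₀ (sq_nonneg a)]
    _ ≤ 4 * r * e + r ^ 2 * α n := by
        nlinarith [norm_nonneg (x (2 * n + 2) - x (2 * n)), norm_nonneg (x (2 * n + 2) - p)]

theorem norm_even_sub_odd (hx : IsAltHalpernMann T U u α β x) {n : ℕ} (hβ : β n ≤ 1) :
    ‖x (2 * n + 2) - x (2 * n + 1)‖ = (1 - β n) * ‖U (x (2 * n + 1)) - x (2 * n + 1)‖ := by
  rw [hx.even, show (1 - β n) • U (x (2 * n + 1)) + β n • x (2 * n + 1) - x (2 * n + 1)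
    = (1 - β n) • (U (x (2 * n + 1)) - x (2 * n + 1)) by module, norm_smul,
    Real.norm_of_nonneg (sub_nonneg.2 hβ)]

end IsAltHalpernMann

theorem IsAltHalpernMann.mul_sq_norm_sub_le {H : Type*} [NormedAddCommGroup H]
    [InnerProductSpace ℝ H] {T U : H → H} {u : H} {α β : ℕ → ℝ} {x : ℕ → H}
    (hx : IsAltHalpernMann T U u α β x) {p : H} {r : ℝ} {n : ℕ}
    (hT : ‖T (x (2 * n)) - p‖ ≤ ‖x (2 * n) - p‖)
    (hU : ‖U (x (2 * n + 1)) - p‖ ≤ ‖x (2 * n + 1) - p‖) (hu : u ∈ closedBall p r)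
    (hx₀ : x (2 * n) ∈ closedBall p r) (hx₂ : x (2 * n + 2) ∈ closedBall p r)
    (hα : α n ∈ Set.Icc (0 : ℝ) 1) (hβ : β n ≤ 1) :
    β n * (1 - β n) * ‖U (x (2 * n + 1)) - x (2 * n + 1)‖ ^ 2
      ≤ 4 * r * ‖x (2 * n + 2) - x (2 * n)‖ + r ^ 2 * α n :=
  calc _ ≤ ‖x (2 * n + 1) - p‖ ^ 2 - ‖x (2 * n + 2) - p‖ ^ 2 := by
        rw [hx.even n]
        exact mul_sq_norm_sub_le_sub_sq_norm_convexComb hβ hU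
    _ ≤ _ := hx.sq_norm_sub_sub_sq_norm_sub_le hT hu hx₀ hx₂ hα

theorem stmt9_general {H : Type*} [NormedAddCommGroup H] [InnerProductSpace ℝ H]
    (C : Set H) (hCconv : Convex ℝ C)
    (T U : H → H) (hTmaps : Set.MapsTo T C C) (hUmaps : Set.MapsTo U C C)
    (hTne : ∀ x ∈ C, ∀ y ∈ C, ‖T x - T y‖ ≤ ‖x - y‖)
    (hUne : ∀ x ∈ C, ∀ y ∈ C, ‖U x - U y‖ ≤ ‖x - y‖)
    (p : H) (hp : p ∈ C) (hTp : T p = p) (hUp : U p = p)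
    (u x₀ : H) (hu : u ∈ C) (hx₀ : x₀ ∈ C)
    (α β : ℕ → ℝ)
    (hα : ∀ n, α n ∈ Set.Icc (0 : ℝ) 1) (hβ : ∀ n, β n ∈ Set.Ioo (0 : ℝ) 1)
    (x : ℕ → H) (hx0 : x 0 = x₀)
    (hxodd : ∀ n, x (2 * n + 1) = (1 - α n) • T (x (2 * n)) + α n • u)
    (hxeven : ∀ n, x (2 * n + 2) = (1 - β n) • U (x (2 * n + 1)) + β n • x (2 * n + 1))
    (N : ℕ) (hN1 : 1 ≤ N)
    (hN : max ‖x₀ - p‖ ‖u - p‖ ≤ (N : ℝ))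
    (Γ1 : ℝ → ℕ) (Γ2 : ℕ → ℕ) (Γ3 Γ4 : ℝ → ℕ)
    (hΓ1 : ∀ ε : ℝ, 0 < ε → ∀ n ≥ Γ1 ε, |α n| ≤ ε)
    (hΓ2 : ∀ k : ℕ, (k : ℝ) ≤ ∑ i ∈ Finset.range (Γ2 k + 1), α i)
    (hΓ3 : ∀ ε : ℝ, 0 < ε → ∀ n : ℕ,
      ∑ i ∈ Finset.Icc (Γ3 ε + 1) (Γ3 ε + n), |α (i + 1) - α i| ≤ ε)
    (hΓ4 : ∀ ε : ℝ, 0 < ε → ∀ n : ℕ,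
      ∑ i ∈ Finset.Icc (Γ4 ε + 1) (Γ4 ε + n), |β (i + 1) - β i| ≤ ε)
    (γ : ℝ) (hγ : γ ∈ Set.Ioc (0 : ℝ) (1 / 2))
    (hγβ : ∀ n, γ ≤ β n ∧ β n ≤ 1 - γ) :
    ∀ ε : ℝ, 0 < ε → ∀ n ≥ theta3 Γ1 Γ2 Γ3 Γ4 N γ ε,
      ‖U (x (2 * n + 1)) - x (2 * n + 1)‖ ≤ ε ∧
        ‖x (2 * n + 2) - x (2 * n + 1)‖ ≤ ε := by
  intro ε hε n hn
  have hN0 : (0 : ℝ) < N := by exact_mod_cast hN1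
  have hγ0 : 0 < γ := hγ.1
  have hβ' : ∀ n, β n ∈ Set.Icc (0 : ℝ) 1 := fun n => Set.Ioo_subset_Icc_self (hβ n)
  set K := C ∩ closedBall p N
  have hTK := mapsTo_inter_closedBall hTmaps hTne hp hTp N
  have hUK := mapsTo_inter_closedBall hUmaps hUne hp hUp N
  have huK : u ∈ K := ⟨hu, mem_closedBall_iff_norm.2 (le_of_max_le_right hN)⟩
  have hx : IsAltHalpernMann T U u α β x := ⟨hxodd, hxeven⟩
  have hxK : ∀ k, x k ∈ K := hx.mem (hCconv.inter (convex_closedBall p N)) hTK hUK huK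
    (hx0 ▸ ⟨hx₀, mem_closedBall_iff_norm.2 (le_of_max_le_left hN)⟩) hα hβ'
  have he : ‖x (2 * n + 2) - x (2 * n)‖ ≤ (γ * ε) ^ 2 / (8 * N) :=
    le_of_theta1_le (e := fun m => ‖x (2 * m + 2) - x (2 * m)‖) hN0 hα
      (fun m => norm_nonneg _)
      (fun m => norm_sub_le_two_mul_of_mem_closedBall (hxK _).2 (hxK _).2)
      (hx.norm_sub_succ_le_of_mem_closedBall hTne hUne hTK hUK huK.2 hxK hα hβ') hΓ2 hΓ3 hΓ4
      (by positivity) (le_of_max_le_left hn)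
  have hαn : α n ≤ (γ * ε) ^ 2 / (2 * N ^ 2) :=
    le_of_abs_le (hΓ1 _ (by positivity) n (le_of_max_le_right hn))
  have hD : γ ^ 2 * ‖U (x (2 * n + 1)) - x (2 * n + 1)‖ ^ 2 ≤ (γ * ε) ^ 2 :=
    calc γ ^ 2 * ‖U (x (2 * n + 1)) - x (2 * n + 1)‖ ^ 2
        ≤ β n * (1 - β n) * ‖U (x (2 * n + 1)) - x (2 * n + 1)‖ ^ 2 := by
          rw [sq γ]
          gcongr ?_ * _
          exact mul_le_mul (hγβ n).1 (by linarith [(hγβ n).2]) hγ0.le (hβ n).1.le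
      _ ≤ 4 * N * ‖x (2 * n + 2) - x (2 * n)‖ + N ^ 2 * α n :=
          hx.mul_sq_norm_sub_le (by simpa [hTp] using hTne _ (hxK _).1 p hp)
            (by simpa [hUp] using hUne _ (hxK _).1 p hp) huK.2 (hxK _).2 (hxK _).2 (hα n)
            (hβ' n).2
      _ ≤ 4 * N * ((γ * ε) ^ 2 / (8 * N)) + N ^ 2 * ((γ * ε) ^ 2 / (2 * N ^ 2)) := by
          gcongr
      _ = (γ * ε) ^ 2 := by
          field_simp
          ring
  have hDε : ‖U (x (2 * n + 1)) - x (2 * n + 1)‖ ≤ ε := by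
    rw [mul_pow] at hD
    exact (pow_le_pow_iff_left₀ (norm_nonneg _) hε.le two_ne_zero).1
      (le_of_mul_le_mul_left hD (by positivity))
  refine ⟨hDε, ?_⟩
  rw [hx.norm_even_sub_odd (hβ' n).2]
  exact (mul_le_of_le_one_left (norm_nonneg _) (by linarith [(hβ n).1])).trans hDε

/-- Rate of convergence `θ3` for `‖U(x_{2n+1}) - x_{2n+1}‖ → 0` and
`‖x_{2n+2} - x_{2n+1}‖ → 0` for the alternating Halpern–Mann iteration. -/
theorem stmt9 {H : Type*} [NormedAddCommGroup H] [InnerProductSpace ℝ H]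
    (C : Set H) (hCne : C.Nonempty) (hCconv : Convex ℝ C)
    (T U : H → H) (hTmaps : Set.MapsTo T C C) (hUmaps : Set.MapsTo U C C)
    (hTne : ∀ x ∈ C, ∀ y ∈ C, ‖T x - T y‖ ≤ ‖x - y‖)
    (hUne : ∀ x ∈ C, ∀ y ∈ C, ‖U x - U y‖ ≤ ‖x - y‖)
    (p : H) (hp : p ∈ C) (hTp : T p = p) (hUp : U p = p)
    (u x₀ : H) (hu : u ∈ C) (hx₀ : x₀ ∈ C)
    (α β : ℕ → ℝ)
    (hα : ∀ n, α n ∈ Set.Icc (0 : ℝ) 1) (hβ : ∀ n, β n ∈ Set.Ioo (0 : ℝ) 1)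
    (x : ℕ → H) (hx0 : x 0 = x₀)
    (hxodd : ∀ n, x (2 * n + 1) = (1 - α n) • T (x (2 * n)) + α n • u)
    (hxeven : ∀ n, x (2 * n + 2) = (1 - β n) • U (x (2 * n + 1)) + β n • x (2 * n + 1))
    (N : ℕ) (hN1 : 1 ≤ N)
    (hN : max ‖x₀ - p‖ ‖u - p‖ ≤ (N : ℝ))
    (Γ1 : ℝ → ℕ) (Γ2 : ℕ → ℕ) (Γ3 Γ4 : ℝ → ℕ)
    (hΓ1 : ∀ ε : ℝ, 0 < ε → ∀ n ≥ Γ1 ε, |α n| ≤ ε)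
    (hΓ2 : ∀ k : ℕ, (k : ℝ) ≤ ∑ i ∈ Finset.range (Γ2 k + 1), α i)
    (hΓ3 : ∀ ε : ℝ, 0 < ε → ∀ n : ℕ,
      ∑ i ∈ Finset.Icc (Γ3 ε + 1) (Γ3 ε + n), |α (i + 1) - α i| ≤ ε)
    (hΓ4 : ∀ ε : ℝ, 0 < ε → ∀ n : ℕ,
      ∑ i ∈ Finset.Icc (Γ4 ε + 1) (Γ4 ε + n), |β (i + 1) - β i| ≤ ε)
    (γ : ℝ) (hγ : γ ∈ Set.Ioc (0 : ℝ) (1 / 2))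
    (hγβ : ∀ n, γ ≤ β n ∧ β n ≤ 1 - γ) :
    ∀ ε : ℝ, 0 < ε → ∀ n ≥ theta3 Γ1 Γ2 Γ3 Γ4 N γ ε,
      ‖U (x (2 * n + 1)) - x (2 * n + 1)‖ ≤ ε ∧
        ‖x (2 * n + 2) - x (2 * n + 1)‖ ≤ ε :=
  stmt9_general C hCconv T U hTmaps hUmaps hTne hUne p hp hTp hUp u x₀ hu hx₀ α β hα hβ x hx0 hxodd
    hxeven N hN1 hN Γ1 Γ2 Γ3 Γ4 hΓ1 hΓ2 hΓ3 hΓ4 γ hγ hγβ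
end

section
/- Let H be a real Hilbert space, x, y, u ∈ H, and b > 0 with b ≥ ‖x − y‖. For t ∈ [0,1] set w_t := (1 − t)·x + t·y. Then for every ε ∈ (0, b²]: if ‖u − x‖² ≤ ‖u − w_t‖² + ε²/b² for all t ∈ [0,1], then ⟨u − x, y − x⟩ ≤ ε. -/
open RealInnerProductSpace

/-! Test the hypothesis at the single point `t = ε / b²`. Expanding the square,
`‖u - w_t‖² = ‖u - x‖² - 2t⟪u - x, y - x⟫ + t²‖y - x‖²`, so the hypothesis gives
`2⟪u - x, y - x⟫ ≤ t‖y - x‖² + (ε²/b²)/t ≤ ε + ε`. -/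

section

variable {H : Type*} [NormedAddCommGroup H] [InnerProductSpace ℝ H]

theorem norm_sub_convexComb_sq (x y u : H) (t : ℝ) :
    ‖u - ((1 - t) • x + t • y)‖ ^ 2
      = ‖u - x‖ ^ 2 - 2 * t * ⟪u - x, y - x⟫ + t ^ 2 * ‖y - x‖ ^ 2 := by
  have hw : u - ((1 - t) • x + t • y) = (u - x) - t • (y - x) := by
    simp only [smul_sub, sub_smul, one_smul]
    abel
  rw [hw, norm_sub_sq_real, real_inner_smul_right, norm_smul, mul_pow, Real.norm_eq_abs, sq_abs]
  ring

theorem two_mul_inner_le_of_norm_sq_le {x y u : H} {t δ : ℝ} (ht : 0 < t)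
    (h : ‖u - x‖ ^ 2 ≤ ‖u - ((1 - t) • x + t • y)‖ ^ 2 + δ) :
    2 * ⟪u - x, y - x⟫ ≤ t * ‖y - x‖ ^ 2 + δ / t := by
  rw [norm_sub_convexComb_sq] at h
  have h' : t * (2 * ⟪u - x, y - x⟫) ≤ t * (t * ‖y - x‖ ^ 2 + δ / t) := by
    rw [mul_add, mul_div_cancel₀ δ ht.ne']
    linarith
  exact le_of_mul_le_mul_left h' ht

end

theorem stmt13_general {H : Type*} [NormedAddCommGroup H] [InnerProductSpace ℝ H]
    (x y u : H) (b : ℝ) (hxy : ‖x - y‖ ≤ b) :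
    ∀ ε : ℝ, 0 < ε → ε ≤ b ^ 2 →
      (∀ t ∈ Set.Icc (0 : ℝ) 1,
        ‖u - x‖ ^ 2 ≤ ‖u - ((1 - t) • x + t • y)‖ ^ 2 + ε ^ 2 / b ^ 2) →
      ⟪u - x, y - x⟫ ≤ ε := by
  intro ε hε hεb h
  have hb2 : 0 < b ^ 2 := hε.trans_le hεb
  have ht : 0 < ε / b ^ 2 := div_pos hε hb2
  have key := two_mul_inner_le_of_norm_sq_le ht (h _ ⟨ht.le, (div_le_one hb2).2 hεb⟩)
  have hyx : ‖y - x‖ ^ 2 ≤ b ^ 2 := by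
    rw [norm_sub_rev]
    exact pow_le_pow_left₀ (norm_nonneg _) hxy 2
  have hfirst : ε / b ^ 2 * ‖y - x‖ ^ 2 ≤ ε := by
    rw [div_mul_eq_mul_div, div_le_iff₀ hb2]
    exact mul_le_mul_of_nonneg_left hyx hε.le
  have hsecond : ε ^ 2 / b ^ 2 / (ε / b ^ 2) = ε := by
    rw [div_div_div_cancel_right₀ hb2.ne', sq, mul_div_cancel_right₀ _ hε.ne']
  linarith

/-- Hilbert-space quantitative projection characterization: if
`‖u - x‖² ≤ ‖u - w_t‖² + ε²/b²` for all `t ∈ [0,1]`, where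
`w_t = (1 - t)x + ty`, then `⟪u - x, y - x⟫ ≤ ε`. -/
theorem stmt13 {H : Type*} [NormedAddCommGroup H] [InnerProductSpace ℝ H]
    (x y u : H) (b : ℝ) (hb : 0 < b) (hxy : ‖x - y‖ ≤ b) :
    ∀ ε : ℝ, 0 < ε → ε ≤ b ^ 2 →
      (∀ t ∈ Set.Icc (0 : ℝ) 1,
        ‖u - x‖ ^ 2 ≤ ‖u - ((1 - t) • x + t • y)‖ ^ 2 + ε ^ 2 / b ^ 2) →
      ⟪u - x, y - x⟫ ≤ ε :=
  stmt13_general x y u b hxy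
end
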